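/- arXiv:2405.11728 — 4 statements merged into one kernel-verified Lean document; each statement's English description precedes it below -/
import Mathlib

section
/- Let σ ∈ Av_n(312). For each descent i of σ, let j_i be the minimal index such that σ(k) ≥ σ(i) for all k ∈ [j_i, i], and define Ψ(σ∘(i i+1)) = σ∘(i+1 i ⋯ j_i+1 j_i). Then Ψ is a bijection from cov_{S_n}(σ) = {σ∘(i i+1) : i a descent of σ} onto cov_{Av_n(312)}(σ), the set of elements covered by σ in the subposet Av_n(312) of S_n. -/
noncomputable section

/-- A permutation is `312`-avoiding if no three positions realize the pattern `312`. -/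
def Av312 {n : ℕ} (σ : Equiv.Perm (Fin n)) : Prop :=
  ¬ ∃ i1 i2 i3 : Fin n, i1 < i2 ∧ i2 < i3 ∧ σ i3 < σ i1 ∧ σ i2 < σ i3

/-- `τ` is covered by `σ` in the right weak order on `S_n`:
`τ = σ ∘ (i i+1)` for a descent `i` of `σ`. -/
def wCov {n : ℕ} (σ τ : Equiv.Perm (Fin n)) : Prop :=
  ∃ i : ℕ, ∃ h : i + 1 < n,
    σ ⟨i + 1, h⟩ < σ ⟨i, Nat.lt_of_succ_lt h⟩ ∧
    τ = σ * Equiv.swap ⟨i, Nat.lt_of_succ_lt h⟩ ⟨i + 1, h⟩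

/-- The right weak order on `S_n`: reflexive-transitive closure of the covering relations. -/
def weakLe {n : ℕ} (τ σ : Equiv.Perm (Fin n)) : Prop :=
  Relation.ReflTransGen (fun a b => wCov a b) σ τ

/-- The cycle `(i+1 i ⋯ j+1 j)`, sending `j ↦ i+1` and `x ↦ x - 1` for `j < x ≤ i + 1`. -/
def cyc (n i j : ℕ) (h : i + 1 < n) : Equiv.Perm (Fin n) :=
  ((List.range (i + 1 - j)).map fun k =>
    Equiv.swap (⟨i - k, by omega⟩ : Fin n) ⟨i - k + 1, by omega⟩).prod

/-- `j_i`: the minimal index `j` such that `σ(k) ≥ σ(i)` for all `k ∈ [j, i]`. -/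
def jmin {n : ℕ} (σ : Equiv.Perm (Fin n)) (i : ℕ) (h : i + 1 < n) : ℕ :=
  sInf {j : ℕ | ∀ k, j ≤ k → ∀ hk : k ≤ i,
    σ ⟨i, Nat.lt_of_succ_lt h⟩ ≤ σ ⟨k, by omega⟩}

/-- The map `Ψ`, sending `σ ∘ (i i+1)` (for a descent `i` of `σ`) to
`σ ∘ (i+1 i ⋯ j_i+1 j_i)`. -/
def psi {n : ℕ} (σ τ : Equiv.Perm (Fin n)) : Equiv.Perm (Fin n) :=
  let a := sInf {a : ℕ | ∃ h : a + 1 < n,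
    τ = σ * Equiv.swap ⟨a, Nat.lt_of_succ_lt h⟩ ⟨a + 1, h⟩}
  if h : a + 1 < n then σ * cyc n a (jmin σ a h) h else τ

/-- The set of elements covered by `σ` in the subposet `Av_n(312)` of `S_n`. -/
def covAv {n : ℕ} (σ : Equiv.Perm (Fin n)) : Set (Equiv.Perm (Fin n)) :=
  {τ | Av312 τ ∧ weakLe τ σ ∧ τ ≠ σ ∧
    ∀ ρ, Av312 ρ → weakLe τ ρ → weakLe ρ σ → ρ = τ ∨ ρ = σ}

/-!
The weak order is inclusion of inversion sets (`Equiv.Perm.inversions`, pairs of values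
`a < b` with `b` placed before `a`). For a descent `i` of `σ`, `σ * cyc n i (jmin σ i h) h` moves
the value `σ (i + 1)` in front of the block `σ j, …, σ i` (`j = jmin σ i h`) of larger values, so
its inversions are those of `σ` minus the pairs `(σ (i + 1), σ k)`, `j ≤ k ≤ i`; minimality of
`j` makes it `312`-avoiding. Conversely a `312`-avoiding `ρ < σ` lies below some `σ * (i i+1)`,
so it keeps `σ (i + 1)` before `σ i`, and then it cannot place any `σ k` of the block before
`σ (i + 1)` without creating the pattern `σ k, σ (i + 1), σ i`. Hence `ρ` lies below the image of
`σ * (i i+1)`, and the descent `i` is recovered as the only descent of `σ` whose inversion that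
image has lost.
-/

namespace Equiv.Perm

variable {n : ℕ}

def inversions (π : Perm (Fin n)) : Finset (Fin n × Fin n) :=
  Finset.univ.filter fun p => p.1 < p.2 ∧ π⁻¹ p.2 < π⁻¹ p.1

@[simp]
lemma mem_inversions {π : Perm (Fin n)} {a b : Fin n} :
    (a, b) ∈ π.inversions ↔ a < b ∧ π⁻¹ b < π⁻¹ a := by
  simp [inversions]

lemma apply_mem_inversions {π : Perm (Fin n)} {p q : Fin n} :
    (π p, π q) ∈ π.inversions ↔ π p < π q ∧ q < p := by
  rw [mem_inversions, coe_inv, symm_apply_apply, symm_apply_apply]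

lemma swap_succ_lt_swap_succ_iff {i : ℕ} (h : i + 1 < n) {x y : Fin n} :
    swap (⟨i, Nat.lt_of_succ_lt h⟩ : Fin n) ⟨i + 1, h⟩ x <
        swap (⟨i, Nat.lt_of_succ_lt h⟩ : Fin n) ⟨i + 1, h⟩ y ↔
      (x < y ∧ ¬(x.val = i ∧ y.val = i + 1)) ∨ (x.val = i + 1 ∧ y.val = i) := by
  simp only [swap_apply_def]
  split_ifs <;> simp only [Fin.lt_def, Fin.ext_iff] at * <;> omega

lemma inversions_mul_swap {σ : Perm (Fin n)} {i : ℕ} (h : i + 1 < n)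
    (hd : σ ⟨i + 1, h⟩ < σ ⟨i, Nat.lt_of_succ_lt h⟩) :
    (σ * swap (⟨i, Nat.lt_of_succ_lt h⟩ : Fin n) ⟨i + 1, h⟩).inversions =
      σ.inversions.erase (σ ⟨i + 1, h⟩, σ ⟨i, Nat.lt_of_succ_lt h⟩) := by
  ext ⟨a, b⟩
  obtain ⟨p, rfl⟩ := σ.surjective a
  obtain ⟨q, rfl⟩ := σ.surjective b
  simp only [mem_inversions, Finset.mem_erase, ne_eq, Prod.mk.injEq, σ.injective.eq_iff,
    mul_inv_rev, swap_inv, coe_mul, Function.comp_apply, coe_inv, symm_apply_apply,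
    swap_succ_lt_swap_succ_iff]
  constructor
  · rintro ⟨hpq, ⟨hqp, hne⟩ | ⟨hq, hp⟩⟩
    · exact ⟨fun ⟨hp, hq⟩ => hne ⟨congrArg Fin.val hq, congrArg Fin.val hp⟩, hpq, hqp⟩
    · obtain rfl : q = ⟨i + 1, h⟩ := Fin.ext hq
      obtain rfl : p = ⟨i, Nat.lt_of_succ_lt h⟩ := Fin.ext hp
      exact absurd hpq hd.not_gt
  · rintro ⟨hne, hpq, hqp⟩
    refine ⟨hpq, Or.inl ⟨hqp, fun ⟨hq, hp⟩ => hne ⟨Fin.ext hp, Fin.ext hq⟩⟩⟩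

lemma eq_of_inversions_eq {σ τ : Perm (Fin n)} (he : τ.inversions = σ.inversions) : τ = σ := by
  have hmem (p q : Fin n) : (σ p < σ q ∧ q < p) ↔ (σ p < σ q ∧ τ⁻¹ (σ q) < τ⁻¹ (σ p)) := by
    simpa using (Finset.ext_iff.1 he (σ p, σ q)).symm
  have hmono : StrictMono fun p => τ⁻¹ (σ p) := by
    intro p q hpq
    rcases lt_or_gt_of_ne (σ.injective.ne hpq.ne) with hσ | hσ
    · refine lt_of_le_of_ne (not_lt.1 fun h => hpq.not_gt ((hmem p q).2 ⟨hσ, h⟩).2) ?_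
      exact (τ⁻¹.injective.comp σ.injective).ne hpq.ne
    · exact ((hmem q p).1 ⟨hσ, hpq⟩).2
  exact Equiv.ext fun p => by simpa using (congrArg τ (congrFun hmono.eq_id p)).symm

/-- Induction on `p - q` for an inversion of `σ` at positions `q < p`: comparing `σ (q + 1)` with
`σ q` and `σ p` reduces it to pairs at smaller distance. -/
lemma inversions_subset_of_forall_descent {σ τ : Perm (Fin n)}
    (hsub : τ.inversions ⊆ σ.inversions)
    (hdesc : ∀ i (h : i + 1 < n), σ ⟨i + 1, h⟩ < σ ⟨i, Nat.lt_of_succ_lt h⟩ →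
      (σ ⟨i + 1, h⟩, σ ⟨i, Nat.lt_of_succ_lt h⟩) ∈ τ.inversions) :
    σ.inversions ⊆ τ.inversions := by
  have hkeep (x y : Fin n) (hxy : x < y) (hσ : σ x < σ y) : τ⁻¹ (σ x) ≤ τ⁻¹ (σ y) :=
    not_lt.1 fun hτ => hxy.not_gt
      (by simpa using (mem_inversions.1 (hsub (mem_inversions.2 ⟨hσ, hτ⟩))).2)
  suffices key : ∀ d (q p : Fin n), p.val - q.val = d → q < p → σ p < σ q →
      τ⁻¹ (σ q) < τ⁻¹ (σ p) by
    rintro ⟨a, b⟩ hab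
    obtain ⟨p, rfl⟩ := σ.surjective a
    obtain ⟨q, rfl⟩ := σ.surjective b
    simp only [mem_inversions, coe_inv, symm_apply_apply] at hab ⊢
    exact ⟨hab.1, key _ q p rfl hab.2 hab.1⟩
  intro d
  induction d using Nat.strong_induction_on with
  | _ d ih =>
  intro q p hd hqp hσ
  rw [Fin.lt_def] at hqp
  by_cases hadj : p.val = q.val + 1
  · have hp : (⟨q.val + 1, hadj ▸ p.isLt⟩ : Fin n) = p := Fin.ext hadj.symm
    have := hdesc q.val (hadj ▸ p.isLt)
    simp only [hp, Fin.eta, mem_inversions, coe_inv] at this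
    exact (this hσ).2
  set r : Fin n := ⟨q.val + 1, by omega⟩
  have hqr : q < r := Fin.lt_def.2 (by simp [r])
  have hrp : r < p := Fin.lt_def.2 (by simp [r]; omega)
  have ih_qr := ih _ (by simp [r]; omega) q r rfl hqr
  have ih_rp := ih _ (by simp [r]; omega) r p rfl hrp
  rcases lt_trichotomy (σ r) (σ p) with hr | hr | hr
  · exact (ih_qr (hr.trans hσ)).trans_le (hkeep r p hrp hr)
  · exact absurd (σ.injective hr) hrp.ne
  · rcases lt_or_gt_of_ne (σ.injective.ne hqr.ne) with hr' | hr'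
    · exact (hkeep q r hqr hr').trans_lt (ih_rp hr)
    · exact (ih_qr hr').trans (ih_rp hr)

end Equiv.Perm

open Equiv Perm

variable {n : ℕ}

lemma inversions_subset_of_wCov {σ τ : Perm (Fin n)} (hc : wCov σ τ) :
    τ.inversions ⊆ σ.inversions := by
  obtain ⟨i, h, hd, rfl⟩ := hc
  rw [inversions_mul_swap h hd]
  exact Finset.erase_subset _ _

lemma inversions_subset_of_weakLe {σ τ : Perm (Fin n)} (hle : weakLe τ σ) :
    τ.inversions ⊆ σ.inversions := by
  induction hle with
  | refl => exact subset_rfl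
  | tail _ hc ih => exact (inversions_subset_of_wCov hc).trans ih

lemma weakLe_of_inversions_subset {σ τ : Perm (Fin n)} (hsub : τ.inversions ⊆ σ.inversions) :
    weakLe τ σ := by
  induction hcard : σ.inversions.card using Nat.strong_induction_on generalizing σ with
  | _ m ih =>
  by_cases he : τ.inversions = σ.inversions
  · rw [eq_of_inversions_eq he]
    exact .refl
  obtain ⟨i, h, hd, hi⟩ : ∃ i, ∃ h : i + 1 < n, σ ⟨i + 1, h⟩ < σ ⟨i, Nat.lt_of_succ_lt h⟩ ∧
      (σ ⟨i + 1, h⟩, σ ⟨i, Nat.lt_of_succ_lt h⟩) ∉ τ.inversions := by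
    by_contra! hdesc
    exact he (hsub.antisymm (inversions_subset_of_forall_descent hsub hdesc))
  have hpair : (σ ⟨i + 1, h⟩, σ ⟨i, Nat.lt_of_succ_lt h⟩) ∈ σ.inversions :=
    apply_mem_inversions.2 ⟨hd, Fin.lt_def.2 (Nat.lt_succ_self i)⟩
  refine .head ⟨i, h, hd, rfl⟩ (ih _ ?_ ?_ rfl)
  · rw [inversions_mul_swap h hd, Finset.card_erase_of_mem hpair, ← hcard]
    exact Nat.sub_lt (Finset.card_pos.2 ⟨_, hpair⟩) one_pos
  · rw [inversions_mul_swap h hd]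
    exact fun p hp => Finset.mem_erase.2 ⟨fun he => hi (he ▸ hp), hsub hp⟩

lemma cyc_self {j : ℕ} (h : j + 1 < n) :
    cyc n j j h = swap (⟨j, Nat.lt_of_succ_lt h⟩ : Fin n) ⟨j + 1, h⟩ := by
  simp [cyc]

lemma cyc_succ {i j : ℕ} (h : i + 2 < n) (hj : j ≤ i) :
    cyc n (i + 1) j h =
      swap (⟨i + 1, Nat.lt_of_succ_lt h⟩ : Fin n) ⟨i + 2, h⟩ * cyc n i j (by omega) := by
  simp only [cyc, show i + 1 + 1 - j = i + 1 - j + 1 by omega, List.range_succ_eq_map,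
    List.map_cons, List.prod_cons, List.map_map]
  congr 2
  refine List.map_congr_left fun k hk => ?_
  simp only [Function.comp_apply, Nat.succ_eq_add_one, show i + 1 - (k + 1) = i - k by omega]

lemma val_cyc_apply {i j : ℕ} (h : i + 1 < n) (hj : j ≤ i) (x : Fin n) :
    (cyc n i j h x).val =
      if x.val = j then i + 1 else if j < x.val ∧ x.val ≤ i + 1 then x.val - 1 else x.val := by
  induction i, hj using Nat.le_induction with
  | base =>
    rw [cyc_self, swap_apply_def]
    split_ifs <;> simp only [Fin.ext_iff] at * <;> omega
  | succ i hj ih =>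
    rw [cyc_succ h hj, mul_apply]
    generalize hy : cyc n i j _ x = y at ih
    specialize ih (by omega)
    rw [swap_apply_def]
    split_ifs at ih ⊢ <;> simp only [Fin.ext_iff] at * <;> omega

lemma val_cyc_symm_apply {i j : ℕ} (h : i + 1 < n) (hj : j ≤ i) (y : Fin n) :
    ((cyc n i j h)⁻¹ y).val =
      if y.val = i + 1 then j else if j ≤ y.val ∧ y.val ≤ i then y.val + 1 else y.val := by
  obtain ⟨x, rfl⟩ := (cyc n i j h).surjective y
  simp only [coe_inv, symm_apply_apply, val_cyc_apply h hj]
  split_ifs <;> omega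

lemma apply_mem_inversions_mul_cyc {σ : Perm (Fin n)} {i j : ℕ} (h : i + 1 < n) (hj : j ≤ i)
    (hblock : ∀ k : Fin n, j ≤ k.val → k.val ≤ i → σ ⟨i + 1, h⟩ < σ k) (p q : Fin n) :
    (σ p, σ q) ∈ (σ * cyc n i j h).inversions ↔
      (σ p, σ q) ∈ σ.inversions ∧ ¬(p.val = i + 1 ∧ j ≤ q.val ∧ q.val ≤ i) := by
  have hinv (x : Fin n) : σ⁻¹ (σ x) = x := σ.symm_apply_apply x
  simp only [mem_inversions, mul_inv_rev, mul_apply, hinv,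
    Fin.lt_def (a := (cyc n i j h)⁻¹ _), val_cyc_symm_apply h hj]
  by_cases hq : q.val = i + 1 ∧ j ≤ p.val ∧ p.val ≤ i
  · obtain rfl : q = ⟨i + 1, h⟩ := Fin.ext hq.1
    have := hblock p hq.2.1 hq.2.2
    constructor
    · exact fun hpq => absurd hpq.1 this.not_gt
    · exact fun hpq => absurd hpq.1.2 (by simp [Fin.lt_def]; omega)
  · rw [Fin.lt_def]
    split_ifs <;> omega

section jmin

variable (σ : Perm (Fin n)) {i : ℕ} (h : i + 1 < n)

lemma jmin_le : jmin σ i h ≤ i :=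
  Nat.sInf_le fun k hik hki => by obtain rfl := le_antisymm hki hik; exact le_rfl

lemma apply_le_of_jmin_le (k : Fin n) (hk : jmin σ i h ≤ k.val) (hki : k.val ≤ i) :
    σ ⟨i, Nat.lt_of_succ_lt h⟩ ≤ σ k := by
  have := Nat.sInf_mem (show Set.Nonempty {j : ℕ | ∀ k, j ≤ k → ∀ hk : k ≤ i,
      σ ⟨i, Nat.lt_of_succ_lt h⟩ ≤ σ ⟨k, by omega⟩} from
    ⟨i, fun k hik hki => by obtain rfl := le_antisymm hki hik; exact le_rfl⟩)
  exact this k.val hk hki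

lemma apply_pred_jmin_lt (hpos : 0 < jmin σ i h) :
    σ ⟨jmin σ i h - 1, by have := jmin_le σ h; omega⟩ < σ ⟨i, Nat.lt_of_succ_lt h⟩ := by
  have hnot := Nat.notMem_of_lt_sInf (Nat.sub_lt hpos one_pos)
  simp only [Set.mem_ofPred_eq, not_forall, not_le] at hnot
  obtain ⟨k, hk, hki, hlt⟩ := hnot
  change jmin σ i h - 1 ≤ k at hk
  rcases hk.lt_or_eq with hk | rfl
  · exact absurd hlt (apply_le_of_jmin_le σ h ⟨k, _⟩ (by simp only; omega) hki).not_gt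
  · exact hlt

end jmin

theorem Av312.mul_cyc {σ : Perm (Fin n)} {i j : ℕ} (h : i + 1 < n) (hσ : Av312 σ) (hj : j ≤ i)
    (hd : σ ⟨i + 1, h⟩ < σ ⟨i, Nat.lt_of_succ_lt h⟩)
    (hblock : ∀ k : Fin n, j ≤ k.val → k.val ≤ i → σ ⟨i, Nat.lt_of_succ_lt h⟩ ≤ σ k)
    (hpred : ∀ hj0 : 0 < j, σ ⟨j - 1, by omega⟩ < σ ⟨i, Nat.lt_of_succ_lt h⟩) :
    Av312 (σ * cyc n i j h) := by
  have hσ' (q₁ q₂ q₃ : Fin n) (h₁₂ : q₁.val < q₂.val) (h₂₃ : q₂.val < q₃.val)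
      (h₃₁ : σ q₃ < σ q₁) (h₂₃' : σ q₂ < σ q₃) : False :=
    hσ ⟨q₁, q₂, q₃, h₁₂, h₂₃, h₃₁, h₂₃'⟩
  rintro ⟨p₁, p₂, p₃, h₁₂, h₂₃, h₃₁, h₂₃'⟩
  rw [Fin.lt_def] at h₁₂ h₂₃
  simp only [mul_apply] at h₃₁ h₂₃'
  have v₁ := val_cyc_apply h hj p₁
  have v₂ := val_cyc_apply h hj p₂
  have v₃ := val_cyc_apply h hj p₃
  generalize cyc n i j h p₁ = y₁ at v₁ h₃₁
  generalize cyc n i j h p₂ = y₂ at v₂ h₂₃'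
  generalize cyc n i j h p₃ = y₃ at v₃ h₃₁ h₂₃'
  -- Outside these two cases `cyc n i j h` is increasing on `p₁ < p₂ < p₃`.
  by_cases hE₁ : p₁.val = j ∧ p₂.val ≤ i + 1
  · obtain rfl : y₁ = ⟨i + 1, h⟩ := Fin.ext (by rw [v₁, if_pos hE₁.1])
    have := hblock y₂ (by split_ifs at v₂ <;> omega) (by split_ifs at v₂ <;> omega)
    exact (h₂₃'.trans h₃₁ |>.trans hd).not_ge this
  by_cases hE₂ : p₂.val = j ∧ p₃.val ≤ i + 1
  · have hj0 : 0 < j := by omega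
    have hy₃ := hblock y₃ (by split_ifs at v₃ <;> omega) (by split_ifs at v₃ <;> omega)
    have hw := (hpred hj0).trans_le hy₃
    by_cases hy₁ : y₁.val = j - 1
    · rw [show y₁ = ⟨j - 1, by omega⟩ from Fin.ext hy₁] at h₃₁
      exact h₃₁.not_gt hw
    · exact hσ' y₁ ⟨j - 1, by omega⟩ y₃ (by dsimp only; split_ifs at v₁ <;> omega)
        (by dsimp only; split_ifs at v₃ <;> omega) h₃₁ hw
  · exact hσ' y₁ y₂ y₃ (by split_ifs at v₁ v₂ <;> omega) (by split_ifs at v₂ v₃ <;> omega)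
      h₃₁ h₂₃'

lemma psi_mul_swap (σ : Perm (Fin n)) {i : ℕ} (h : i + 1 < n) :
    psi σ (σ * swap ⟨i, Nat.lt_of_succ_lt h⟩ ⟨i + 1, h⟩) = σ * cyc n i (jmin σ i h) h := by
  have hset : {a : ℕ | ∃ h' : a + 1 < n, σ * swap ⟨i, Nat.lt_of_succ_lt h⟩ ⟨i + 1, h⟩ =
      σ * swap ⟨a, Nat.lt_of_succ_lt h'⟩ ⟨a + 1, h'⟩} = {i} := by
    ext a
    refine ⟨fun ⟨h', he⟩ => ?_, fun ha => ⟨ha ▸ h, by subst ha; rfl⟩⟩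
    rw [Set.mem_singleton_iff]
    have := congrArg (· ⟨i, Nat.lt_of_succ_lt h⟩) (mul_left_cancel he)
    rw [swap_apply_left, swap_apply_def] at this
    split_ifs at this <;> simp only [Fin.ext_iff] at * <;> omega
  simp only [psi, hset, csInf_singleton, dif_pos h]

section descent

variable {σ : Perm (Fin n)} {i : ℕ} {h : i + 1 < n}

lemma lt_apply_of_jmin_le (hd : σ ⟨i + 1, h⟩ < σ ⟨i, Nat.lt_of_succ_lt h⟩) (k : Fin n)
    (hk : jmin σ i h ≤ k.val) (hki : k.val ≤ i) : σ ⟨i + 1, h⟩ < σ k :=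
  hd.trans_le (apply_le_of_jmin_le σ h k hk hki)

lemma inversions_mul_cyc_jmin_subset (hd : σ ⟨i + 1, h⟩ < σ ⟨i, Nat.lt_of_succ_lt h⟩) :
    (σ * cyc n i (jmin σ i h) h).inversions ⊆ σ.inversions := by
  rintro ⟨a, b⟩ hab
  obtain ⟨p, rfl⟩ := σ.surjective a
  obtain ⟨q, rfl⟩ := σ.surjective b
  exact ((apply_mem_inversions_mul_cyc h (jmin_le σ h) (lt_apply_of_jmin_le hd) p q).1 hab).1

lemma descent_mem_inversions_mul_cyc_jmin_iff
    (hd : σ ⟨i + 1, h⟩ < σ ⟨i, Nat.lt_of_succ_lt h⟩) {i' : ℕ} (h' : i' + 1 < n) :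
    (σ ⟨i' + 1, h'⟩, σ ⟨i', Nat.lt_of_succ_lt h'⟩) ∈ (σ * cyc n i (jmin σ i h) h).inversions ↔
      σ ⟨i' + 1, h'⟩ < σ ⟨i', Nat.lt_of_succ_lt h'⟩ ∧ i' ≠ i := by
  rw [apply_mem_inversions_mul_cyc h (jmin_le σ h) (lt_apply_of_jmin_le hd)]
  have := jmin_le σ h
  simp only [mem_inversions, coe_inv, symm_apply_apply, Fin.lt_def, lt_add_iff_pos_right,
    zero_lt_one, and_true]
  omega

lemma mul_cyc_jmin_ne (hd : σ ⟨i + 1, h⟩ < σ ⟨i, Nat.lt_of_succ_lt h⟩) :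
    σ * cyc n i (jmin σ i h) h ≠ σ := by
  intro he
  have hnot := (descent_mem_inversions_mul_cyc_jmin_iff hd h).not.2 fun hi => hi.2 rfl
  rw [he, apply_mem_inversions] at hnot
  exact hnot ⟨hd, Fin.lt_def.2 (Nat.lt_succ_self i)⟩

lemma av312_mul_cyc_jmin (hσ : Av312 σ) (hd : σ ⟨i + 1, h⟩ < σ ⟨i, Nat.lt_of_succ_lt h⟩) :
    Av312 (σ * cyc n i (jmin σ i h) h) :=
  hσ.mul_cyc h (jmin_le σ h) hd (apply_le_of_jmin_le σ h) (apply_pred_jmin_lt σ h)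

lemma inversions_subset_mul_cyc_jmin (hd : σ ⟨i + 1, h⟩ < σ ⟨i, Nat.lt_of_succ_lt h⟩)
    {ρ : Perm (Fin n)} (hρ : Av312 ρ)
    (hsub : ρ.inversions ⊆ σ.inversions.erase (σ ⟨i + 1, h⟩, σ ⟨i, Nat.lt_of_succ_lt h⟩)) :
    ρ.inversions ⊆ (σ * cyc n i (jmin σ i h) h).inversions := by
  rintro ⟨a, b⟩ hab
  obtain ⟨p, rfl⟩ := σ.surjective a
  obtain ⟨q, rfl⟩ := σ.surjective b
  obtain ⟨hne, hσpq⟩ := Finset.mem_erase.1 (hsub hab)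
  rw [apply_mem_inversions_mul_cyc h (jmin_le σ h) (lt_apply_of_jmin_le hd)]
  refine ⟨hσpq, fun ⟨hp, hjq, hqi⟩ => ?_⟩
  obtain rfl : p = ⟨i + 1, h⟩ := Fin.ext hp
  have hqi' : q.val ≠ i := fun hq => hne (by rw [show q = ⟨i, _⟩ from Fin.ext hq])
  have hiq : σ ⟨i, Nat.lt_of_succ_lt h⟩ < σ q :=
    (apply_le_of_jmin_le σ h q hjq hqi).lt_of_ne (σ.injective.ne (by simp [Fin.ext_iff]; omega))
  have hpair : (σ ⟨i + 1, h⟩, σ ⟨i, Nat.lt_of_succ_lt h⟩) ∉ ρ.inversions :=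
    fun hm => (Finset.mem_erase.1 (hsub hm)).1 rfl
  rw [mem_inversions] at hab hpair
  have hmid : ρ⁻¹ (σ ⟨i + 1, h⟩) < ρ⁻¹ (σ ⟨i, Nat.lt_of_succ_lt h⟩) :=
    (not_lt.1 fun hlt => hpair ⟨hd, hlt⟩).lt_of_ne
      (ρ⁻¹.injective.ne (σ.injective.ne (by simp [Fin.ext_iff])))
  exact hρ ⟨_, _, _, hab.2, hmid, by simpa using hiq, by simpa using hd⟩

lemma eq_of_inversions_mul_cyc_jmin_subset {i' : ℕ} {h' : i' + 1 < n}
    (hd : σ ⟨i + 1, h⟩ < σ ⟨i, Nat.lt_of_succ_lt h⟩)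
    (hd' : σ ⟨i' + 1, h'⟩ < σ ⟨i', Nat.lt_of_succ_lt h'⟩)
    (hsub : (σ * cyc n i (jmin σ i h) h).inversions ⊆
      (σ * cyc n i' (jmin σ i' h') h').inversions) :
    i = i' := by
  by_contra hne
  have := hsub ((descent_mem_inversions_mul_cyc_jmin_iff hd h').2 ⟨hd', Ne.symm hne⟩)
  exact ((descent_mem_inversions_mul_cyc_jmin_iff hd' h').1 this).2 rfl

end descent

lemma exists_descent_of_weakLe_of_ne {σ ρ : Perm (Fin n)} (hle : weakLe ρ σ) (hne : ρ ≠ σ) :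
    ∃ i, ∃ h : i + 1 < n, σ ⟨i + 1, h⟩ < σ ⟨i, Nat.lt_of_succ_lt h⟩ ∧
      ρ.inversions ⊆ σ.inversions.erase (σ ⟨i + 1, h⟩, σ ⟨i, Nat.lt_of_succ_lt h⟩) := by
  rcases Relation.ReflTransGen.cases_head hle with he | ⟨_, ⟨i, h, hd, rfl⟩, hle'⟩
  · exact absurd he.symm hne
  · exact ⟨i, h, hd, inversions_mul_swap h hd ▸ inversions_subset_of_weakLe hle'⟩

lemma exists_weakLe_mul_cyc_jmin {σ ρ : Perm (Fin n)} (hρ : Av312 ρ) (hle : weakLe ρ σ)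
    (hne : ρ ≠ σ) :
    ∃ i, ∃ h : i + 1 < n, σ ⟨i + 1, h⟩ < σ ⟨i, Nat.lt_of_succ_lt h⟩ ∧
      weakLe ρ (σ * cyc n i (jmin σ i h) h) := by
  obtain ⟨i, h, hd, hsub⟩ := exists_descent_of_weakLe_of_ne hle hne
  exact ⟨i, h, hd, weakLe_of_inversions_subset (inversions_subset_mul_cyc_jmin hd hρ hsub)⟩

lemma mul_cyc_jmin_mem_covAv {σ : Perm (Fin n)} {i : ℕ} {h : i + 1 < n} (hσ : Av312 σ)
    (hd : σ ⟨i + 1, h⟩ < σ ⟨i, Nat.lt_of_succ_lt h⟩) :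
    σ * cyc n i (jmin σ i h) h ∈ covAv σ := by
  refine ⟨av312_mul_cyc_jmin hσ hd, weakLe_of_inversions_subset
    (inversions_mul_cyc_jmin_subset hd), mul_cyc_jmin_ne hd, fun ρ hρ hτρ hρσ => ?_⟩
  by_cases hρσ' : ρ = σ
  · exact .inr hρσ'
  obtain ⟨i', h', hd', hsub⟩ := exists_descent_of_weakLe_of_ne hρσ hρσ'
  have hρτ' := inversions_subset_mul_cyc_jmin hd' hρ hsub
  have hτρ := inversions_subset_of_weakLe hτρ
  obtain rfl := eq_of_inversions_mul_cyc_jmin_subset hd hd' (hτρ.trans hρτ')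
  exact .inl (eq_of_inversions_eq (hρτ'.antisymm hτρ))

/-- For a `312`-avoiding permutation `σ`, the map `Ψ` with
`Ψ(σ ∘ (i i+1)) = σ ∘ (i+1 i ⋯ j_i+1 j_i)` is a bijection from
`cov_{S_n}(σ) = {σ ∘ (i i+1) : i a descent of σ}` onto `cov_{Av_n(312)}(σ)`. -/
theorem thm13 (n : ℕ) (σ : Equiv.Perm (Fin n)) (hσ : Av312 σ) :
    (∀ i : ℕ, ∀ h : i + 1 < n, σ ⟨i + 1, h⟩ < σ ⟨i, Nat.lt_of_succ_lt h⟩ →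
      psi σ (σ * Equiv.swap ⟨i, Nat.lt_of_succ_lt h⟩ ⟨i + 1, h⟩) =
        σ * cyc n i (jmin σ i h) h) ∧
    Set.BijOn (psi σ) {τ | wCov σ τ} (covAv σ) := by
  refine ⟨fun i h _ => psi_mul_swap σ h, ?_, ?_, ?_⟩
  · rintro _ ⟨i, h, hd, rfl⟩
    rw [psi_mul_swap σ h]
    exact mul_cyc_jmin_mem_covAv hσ hd
  · rintro _ ⟨i, h, hd, rfl⟩ _ ⟨i', h', hd', rfl⟩ he
    rw [psi_mul_swap σ h, psi_mul_swap σ h'] at he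
    obtain rfl := eq_of_inversions_mul_cyc_jmin_subset hd hd' (congrArg inversions he).subset
    rfl
  · rintro ρ ⟨hρ, hle, hne, hcov⟩
    obtain ⟨i, h, hd, hρτ⟩ := exists_weakLe_mul_cyc_jmin hρ hle hne
    refine ⟨_, ⟨i, h, hd, rfl⟩, ?_⟩
    rw [psi_mul_swap σ h]
    have hτ := mul_cyc_jmin_mem_covAv hσ hd
    exact (hcov _ hτ.1 hρτ hτ.2.1).resolve_right hτ.2.2.1
end
end

section
/- For every positive integer n, the relation ≤ on F_ord(n) (the reflexive–transitive closure of the relations F ≥ F[v] over non-leaf vertices v) is a partial order, and its covering relation is exactly ⋖, where F' ⋖ F means that F' = F[v] for some non-leaf vertex v of F. -/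
/-! The move `F ↦ F.op v` at a non-leaf `v` strictly shrinks the subtree of `v` and keeps the
size of every other subtree. Hence subtree sizes can only decrease along `≤`, and no move can be
undone: antisymmetry. For the covering relation: a forest strictly between `F.op v` and `F` is
reached from `F` by a first move at some `u`; `u = v` would force it to equal `F.op v` by
antisymmetry, and `u ≠ v` would push the size at `u` below its value in `F.op v`. -/

open scoped Classical

noncomputable section

/-- An ordered forest on `n` vertices, with vertices identified with their labels `1, …, n`
under left-to-right preorder traversal, encoded by its parent function: `par i` is the
parent of vertex `i` (and `par i = 0` when `i` is a root).  The condition `nested` says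
exactly that the function arises from the preorder traversal labeling of an ordered forest:
the vertices strictly between `par i` and `i` all lie in the subtree interval below `par i`.
Values outside `[1, n]` are normalized to `0`, so that two ordered forests are equal iff
their parent functions are equal. -/
structure OForest (n : ℕ) where
  par : ℕ → ℕ
  par_lt : ∀ i, 1 ≤ i → i ≤ n → par i < i
  nested : ∀ i k, 1 ≤ i → i ≤ n → par i < k → k < i → par i ≤ par k
  par_out : ∀ i, i = 0 ∨ n < i → par i = 0

/-- Auxiliary construction for the operation on a non-leaf vertex `v`:
the rightmost child `v'` of `v` is reattached to the parent of `v`. -/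
def OForest.mkOp {n : ℕ} (F : OForest n) (v : ℕ) (hv : 1 ≤ v)
    (hne : ((Finset.Icc 1 n).filter fun i => F.par i = v).Nonempty) : OForest n where
  par i := if i = ((Finset.Icc 1 n).filter fun i => F.par i = v).max' hne then F.par v
           else F.par i
  par_lt := by
    set v' := ((Finset.Icc 1 n).filter fun i => F.par i = v).max' hne with hv'def
    have hmem := Finset.max'_mem _ hne
    rw [← hv'def] at hmem
    simp only [Finset.mem_filter, Finset.mem_Icc] at hmem
    obtain ⟨⟨hv'1, hv'n⟩, hpar⟩ := hmem
    have hvlt : v < v' := hpar ▸ F.par_lt v' hv'1 hv'n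
    have hvn : v ≤ n := le_trans hvlt.le hv'n
    have hpv : F.par v < v := F.par_lt v hv hvn
    intro i h1 h2
    try dsimp only
    by_cases hi : i = v'
    · subst hi; rw [if_pos rfl]; omega
    · rw [if_neg hi]; exact F.par_lt i h1 h2
  nested := by
    set v' := ((Finset.Icc 1 n).filter fun i => F.par i = v).max' hne with hv'def
    have hmem := Finset.max'_mem _ hne
    rw [← hv'def] at hmem
    simp only [Finset.mem_filter, Finset.mem_Icc] at hmem
    obtain ⟨⟨hv'1, hv'n⟩, hpar⟩ := hmem
    have hvlt : v < v' := hpar ▸ F.par_lt v' hv'1 hv'n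
    have hvn : v ≤ n := le_trans hvlt.le hv'n
    have hpv : F.par v < v := F.par_lt v hv hvn
    intro i k h1 h2 h3 h4
    try dsimp only at h3 ⊢
    by_cases hi : i = v'
    · subst hi
      rw [if_pos rfl] at h3 ⊢
      rw [if_neg (by omega : ¬ k = v')]
      by_cases hkv : k = v
      · subst hkv; exact le_refl _
      · by_cases hk2 : k < v
        · exact F.nested v k hv hvn h3 hk2
        · have hvk : v < k := by omega
          have hnk := F.nested v' k hv'1 hv'n (by rw [hpar]; exact hvk) h4
          rw [hpar] at hnk
          omega
    · rw [if_neg hi] at h3 ⊢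
      by_cases hk : k = v'
      · subst hk
        rw [if_pos rfl]
        have h5 : F.par i ≤ v := by
          have hni := F.nested i v' h1 h2 h3 h4
          rw [hpar] at hni; exact hni
        rcases lt_or_eq_of_le h5 with h6 | h6
        · exact F.nested i v h1 h2 h6 (by omega)
        · exfalso
          have hiC : i ∈ (Finset.Icc 1 n).filter fun j => F.par j = v :=
            Finset.mem_filter.2 ⟨Finset.mem_Icc.2 ⟨h1, h2⟩, h6⟩
          have := Finset.le_max' _ i hiC
          omega
      · rw [if_neg hk]; exact F.nested i k h1 h2 h3 h4
  par_out := by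
    set v' := ((Finset.Icc 1 n).filter fun i => F.par i = v).max' hne with hv'def
    have hmem := Finset.max'_mem _ hne
    rw [← hv'def] at hmem
    simp only [Finset.mem_filter, Finset.mem_Icc] at hmem
    obtain ⟨⟨hv'1, hv'n⟩, hpar⟩ := hmem
    intro i hi
    try dsimp only
    by_cases h' : i = v'
    · subst h'; exact absurd hi (by omega)
    · rw [if_neg h']; exact F.par_out i hi

/-- The operation on vertex `v` of `F`. -/
def OForest.op {n : ℕ} (F : OForest n) (v : ℕ) : OForest n :=
  if h : 1 ≤ v ∧ ((Finset.Icc 1 n).filter fun i => F.par i = v).Nonempty then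
    F.mkOp v h.1 h.2
  else F

/-- Vertex `v` is a non-leaf vertex of `F`: it is a vertex in `[1, n]` having a child. -/
def OForest.NonLeaf {n : ℕ} (F : OForest n) (v : ℕ) : Prop :=
  1 ≤ v ∧ v ≤ n ∧ ∃ i, 1 ≤ i ∧ i ≤ n ∧ F.par i = v

/-- The covering relation on ordered forests: `F` covers `G` iff `G = F.op v` for a
non-leaf vertex `v` of `F`. -/
def OForest.CovRel {n : ℕ} (F G : OForest n) : Prop :=
  ∃ v, F.NonLeaf v ∧ G = F.op v

/-- The partial order on ordered forests on `n` vertices: the reflexive-transitive closure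
of the relations `F ≥ F.op v` over non-leaf vertices `v`. -/
def OForest.le {n : ℕ} (G F : OForest n) : Prop :=
  Relation.ReflTransGen (fun A B : OForest n => A.CovRel B) F G

/-- The path tree: the maximal element of the Tamari lattice, in which vertex `t + 1` is the
unique child of vertex `t` for each `t < n`. -/
def pathForest (n : ℕ) : OForest n where
  par i := if 1 ≤ i ∧ i ≤ n then i - 1 else 0
  par_lt := by intro i h1 h2; simp only [if_pos (And.intro h1 h2)]; omega
  nested := by
    intro i k h1 h2 h3 h4
    try dsimp only at h3 ⊢
    rw [if_pos (And.intro h1 h2)] at h3 ⊢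
    split <;> omega
  par_out := by intro i h; (try dsimp only); split <;> omega

namespace OForest

variable {n : ℕ}

/-- In preorder, `j` is a descendant-or-self of `v` iff every vertex of `(v, j]` has its
parent in `[v, ∞)`. -/
def InSubtree (F : OForest n) (v j : ℕ) : Prop :=
  v ≤ j ∧ ∀ k, v < k → k ≤ j → v ≤ F.par k

def subtreeSize (F : OForest n) (v : ℕ) : ℕ :=
  ((Finset.Icc 1 n).filter (F.InSubtree v)).card

lemma par_le_self (F : OForest n) (i : ℕ) : F.par i ≤ i := by
  by_cases hi : 1 ≤ i ∧ i ≤ n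
  · exact (F.par_lt i hi.1 hi.2).le
  · rw [F.par_out i (by omega)]
    exact i.zero_le

/-- `G` is `F` with the child `v'` of the vertex `v` re-attached to the parent of `v`. -/
structure IsHoist (F G : OForest n) (v v' : ℕ) : Prop where
  one_le : 1 ≤ v
  le_n : v' ≤ n
  par_child : F.par v' = v
  par_eq_update : G.par = Function.update F.par v' (F.par v)

lemma exists_isHoist_op {F : OForest n} {v : ℕ} (hv : F.NonLeaf v) :
    ∃ v', F.IsHoist (F.op v) v v' := by
  obtain ⟨hv1, -, i, hi1, hin, hpi⟩ := hv
  have hne : ((Finset.Icc 1 n).filter fun i => F.par i = v).Nonempty :=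
    ⟨i, Finset.mem_filter.2 ⟨Finset.mem_Icc.2 ⟨hi1, hin⟩, hpi⟩⟩
  have hmem := Finset.max'_mem _ hne
  simp only [Finset.mem_filter, Finset.mem_Icc] at hmem
  refine ⟨_, hv1, hmem.1.2, hmem.2, funext fun k => ?_⟩
  rw [op, dif_pos ⟨hv1, hne⟩, Function.update_apply]
  rfl

namespace IsHoist

variable {F G : OForest n} {v v' : ℕ}

lemma one_le_child (h : F.IsHoist G v v') : 1 ≤ v' := by
  by_contra h0
  have := F.par_out v' (by omega)
  have := h.one_le
  have := h.par_child
  omega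

lemma lt_child (h : F.IsHoist G v v') : v < v' :=
  h.par_child ▸ F.par_lt v' h.one_le_child h.le_n

lemma inSubtree_of_inSubtree (h : F.IsHoist G v v') {w j : ℕ} (hj : G.InSubtree w j) :
    F.InSubtree w j := by
  refine ⟨hj.1, fun k hwk hkj => ?_⟩
  have hk := hj.2 k hwk hkj
  rw [h.par_eq_update, Function.update_apply] at hk
  split_ifs at hk with hkv'
  · rw [hkv', h.par_child]
    exact hk.trans (F.par_le_self v)
  · exact hk

lemma inSubtree_of_inSubtree_of_ne (h : F.IsHoist G v v') {w j : ℕ} (hwv : w ≠ v)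
    (hj : F.InSubtree w j) : G.InSubtree w j := by
  refine ⟨hj.1, fun k hwk hkj => ?_⟩
  rw [h.par_eq_update, Function.update_apply]
  split_ifs with hkv'
  · have hwv' := h.par_child ▸ hkv' ▸ hj.2 k hwk hkj
    have := h.lt_child
    exact hj.2 v (by omega) (by omega)
  · exact hj.2 k hwk hkj

lemma inSubtree_child (h : F.IsHoist G v v') : F.InSubtree v v' ∧ ¬ G.InSubtree v v' := by
  have hvv' := h.lt_child
  refine ⟨⟨hvv'.le, fun k hvk hkv' => ?_⟩, fun hG => ?_⟩
  · rcases hkv'.lt_or_eq with hkv' | rfl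
    · simpa only [h.par_child] using
        F.nested v' k h.one_le_child h.le_n (h.par_child ▸ hvk) hkv'
    · exact h.par_child.ge
  · have := hG.2 v' hvv' le_rfl
    rw [h.par_eq_update, Function.update_self] at this
    have := F.par_lt v h.one_le (by have := h.le_n; omega)
    omega

lemma subtreeSize_lt (h : F.IsHoist G v v') : G.subtreeSize v < F.subtreeSize v := by
  obtain ⟨hF, hG⟩ := h.inSubtree_child
  refine Finset.card_lt_card ⟨Finset.monotone_filter_right _ fun j _ =>
    h.inSubtree_of_inSubtree, fun hsub => hG ?_⟩
  exact (Finset.mem_filter.1 <|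
    hsub (Finset.mem_filter.2 ⟨Finset.mem_Icc.2 ⟨h.one_le_child, h.le_n⟩, hF⟩)).2

lemma subtreeSize_of_ne (h : F.IsHoist G v v') {w : ℕ} (hwv : w ≠ v) :
    G.subtreeSize w = F.subtreeSize w :=
  congrArg Finset.card <| Finset.filter_congr fun _ _ =>
    ⟨h.inSubtree_of_inSubtree, h.inSubtree_of_inSubtree_of_ne hwv⟩

end IsHoist

lemma subtreeSize_op_lt {F : OForest n} {v : ℕ} (hv : F.NonLeaf v) :
    (F.op v).subtreeSize v < F.subtreeSize v :=
  (exists_isHoist_op hv).choose_spec.subtreeSize_lt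

lemma subtreeSize_op_of_ne {F : OForest n} {v w : ℕ} (hv : F.NonLeaf v) (hwv : w ≠ v) :
    (F.op v).subtreeSize w = F.subtreeSize w :=
  (exists_isHoist_op hv).choose_spec.subtreeSize_of_ne hwv

lemma op_ne_self {F : OForest n} {v : ℕ} (hv : F.NonLeaf v) : F.op v ≠ F := fun h =>
  (subtreeSize_op_lt hv).ne (by rw [h])

lemma subtreeSize_op_le {F : OForest n} {v : ℕ} (hv : F.NonLeaf v) (w : ℕ) :
    (F.op v).subtreeSize w ≤ F.subtreeSize w := by
  rcases eq_or_ne w v with rfl | hwv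
  · exact (subtreeSize_op_lt hv).le
  · exact (subtreeSize_op_of_ne hv hwv).le

lemma CovRel.le {F G : OForest n} (h : F.CovRel G) : G.le F :=
  .single h

lemma le.subtreeSize_le {F G : OForest n} (h : G.le F) (w : ℕ) :
    G.subtreeSize w ≤ F.subtreeSize w := by
  induction h with
  | refl => exact le_rfl
  | tail _ hcov ih =>
    obtain ⟨v, hv, rfl⟩ := hcov
    exact (subtreeSize_op_le hv w).trans ih

lemma le.exists_le_op_of_ne {F G : OForest n} (h : G.le F) (hne : G ≠ F) :
    ∃ v, F.NonLeaf v ∧ G.le (F.op v) := by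
  rcases Relation.ReflTransGen.cases_head h with rfl | ⟨_, ⟨v, hv, rfl⟩, hG⟩
  · exact absurd rfl hne
  · exact ⟨v, hv, hG⟩

lemma le_antisymm {F G : OForest n} (hFG : F.le G) (hGF : G.le F) : F = G := by
  by_contra hne
  obtain ⟨v, hv, hF⟩ := hFG.exists_le_op_of_ne hne
  have := hGF.subtreeSize_le v
  have := hF.subtreeSize_le v
  have := subtreeSize_op_lt hv
  omega

lemma eq_op_or_eq_of_le_of_le {F z : OForest n} {v : ℕ} (hv : F.NonLeaf v)
    (hlo : (F.op v).le z) (hhi : z.le F) : z = F.op v ∨ z = F := by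
  by_cases hzF : z = F
  · exact .inr hzF
  obtain ⟨u, hu, hz⟩ := hhi.exists_le_op_of_ne hzF
  rcases eq_or_ne u v with rfl | huv
  · exact .inl (le_antisymm hz hlo)
  · have := hz.subtreeSize_le u
    have := hlo.subtreeSize_le u
    have := subtreeSize_op_lt hu
    have := subtreeSize_op_of_ne hv huv
    omega

lemma covRel_of_le_of_ne {F G : OForest n} (h : G.le F) (hne : G ≠ F)
    (hcov : ∀ z : OForest n, G.le z → z.le F → z = G ∨ z = F) : F.CovRel G := by
  obtain ⟨v, hv, hG⟩ := h.exists_le_op_of_ne hne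
  rcases hcov (F.op v) hG (CovRel.le ⟨v, hv, rfl⟩) with h | h
  · exact ⟨v, hv, h.symm⟩
  · exact absurd h (op_ne_self hv)

end OForest

/-- The relation `≤` on ordered forests on `n` vertices is a partial order (it is reflexive,
transitive and antisymmetric), and its covering relation is exactly `⋖`, where `F' ⋖ F`
means `F' = F.op v` for some non-leaf vertex `v` of `F`. -/
theorem thm14 (n : ℕ) :
    (∀ F : OForest n, F.le F) ∧
    (∀ F G H : OForest n, F.le G → G.le H → F.le H) ∧
    (∀ F G : OForest n, F.le G → G.le F → F = G) ∧
    (∀ F' F : OForest n,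
      (F'.le F ∧ F' ≠ F ∧ ∀ z : OForest n, F'.le z → z.le F → z = F' ∨ z = F) ↔
        F.CovRel F') := by
  refine ⟨fun _ => .refl, fun _ _ _ hFG hGH => hGH.trans hFG,
    fun _ _ => OForest.le_antisymm, fun F' F => ⟨?_, ?_⟩⟩
  · rintro ⟨hle, hne, hcov⟩
    exact OForest.covRel_of_le_of_ne hle hne hcov
  · rintro ⟨v, hv, rfl⟩
    exact ⟨OForest.CovRel.le ⟨v, hv, rfl⟩, OForest.op_ne_self hv,
      fun z hlo hhi => OForest.eq_op_or_eq_of_le_of_le hv hlo hhi⟩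

end
end

section
/- Let n be a positive integer and let S_1, S_2, … be a sequence of subsets of [n]. Starting from F_0 = the path tree 1̂ ∈ F_ord(n) (the ordered tree in which vertex t+1 is the unique child of vertex t for each t < n), define F_t from F_{t−1} by operating on the vertices of S_t one at a time in increasing order of label. For each vertex i, let h_i = min{t : i ∈ S_t}. Suppose 1 ≤ k < l ≤ n are such that h_l is finite, h_k > h_l, and h_l ≥ h_i for every i with k < i < l. Then in F_{h_l}, vertex l is a child of vertex k. -/
open scoped Classical

noncomputable section

/-- The trajectory obtained from the path tree by, at each step `t = 1, 2, …`, operating on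
the vertices of `S t` one at a time in increasing order of label. -/
def trajOfSets (n : ℕ) (S : ℕ → Finset ℕ) : ℕ → OForest n
  | 0 => pathForest n
  | t + 1 => (((S (t + 1)).sort (· ≤ ·)).foldl (fun A i => A.op i) (trajOfSets n S t))

/-! Call a vertex unoperated while it has not yet been operated on.  Throughout the process
no unoperated vertex lies strictly between a vertex and its parent, and the parent of an
unoperated vertex is unoperated: operating on `a` reattaches its rightmost child `v'` to the
parent of `a`, and the only vertex strictly between `F.par a` and `v'` that could be
unoperated is `a` itself, which is now operated.  Hence, when round `h_l` reaches `l`, its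
parent is the largest unoperated vertex below it, namely `k`; the later
operations of that round act on vertices `≥ l` and do not move `l`. -/

namespace OForest

variable {n : ℕ}

theorem op_spec (F : OForest n) {a : ℕ} (ha : a ≠ 0) :
    (F.op a = F ∧ ∀ c, 1 ≤ c → c ≤ n → F.par c ≠ a) ∨
    ∃ v', 1 ≤ v' ∧ v' ≤ n ∧ F.par v' = a ∧ (∀ c, 1 ≤ c → c ≤ n → F.par c = a → c ≤ v') ∧
      ∀ i, (F.op a).par i = if i = v' then F.par a else F.par i := by
  unfold op
  split_ifs with hc
  · right
    have hmem := Finset.max'_mem _ hc.2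
    simp only [Finset.mem_filter, Finset.mem_Icc] at hmem
    refine ⟨_, hmem.1.1, hmem.1.2, hmem.2, fun c hc1 hcn hca => ?_, fun i => rfl⟩
    exact Finset.le_max' _ c (by simp [hc1, hcn, hca])
  · left
    refine ⟨rfl, fun c hc1 hcn hca => hc ⟨Nat.one_le_iff_ne_zero.2 ha, c, ?_⟩⟩
    simp [hc1, hcn, hca]

theorem op_par_of_le (F : OForest n) {a i : ℕ} (hi : 0 < i) (hia : i ≤ a) :
    (F.op a).par i = F.par i := by
  rcases F.op_spec (a := a) (by omega) with ⟨hop, -⟩ | ⟨v', hv'1, hv'n, hv'a, -, hop⟩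
  · rw [hop]
  · have := F.par_lt v' hv'1 hv'n
    rw [hop, if_neg (by omega)]

theorem foldl_op_par_of_le (F : OForest n) {L : List ℕ} {i : ℕ} (hi : 0 < i)
    (hL : ∀ a ∈ L, i ≤ a) : (L.foldl op F).par i = F.par i := by
  induction L generalizing F with
  | nil => rfl
  | cons a L ih =>
    rw [List.foldl_cons, ih _ fun b hb => hL b (List.mem_cons_of_mem a hb),
      op_par_of_le F hi (hL a List.mem_cons_self)]

theorem foldl_op_par_eq_filter_lt (F : OForest n) {L : List ℕ} (hL : L.Pairwise (· < ·))
    {l : ℕ} (hl : 0 < l) : (L.foldl op F).par l = ((L.filter (· < l)).foldl op F).par l := by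
  induction L generalizing F with
  | nil => rfl
  | cons a L ih =>
    rw [List.pairwise_cons] at hL
    by_cases hal : a < l
    · simpa [List.filter_cons, hal] using ih (F.op a) hL.2
    · have hnil : L.filter (· < l) = [] :=
        List.filter_eq_nil_iff.2 fun b hb => by have := hL.1 b hb; simp only [decide_eq_true_eq]; omega
      rw [List.filter_cons_of_neg (by simpa using hal), hnil, List.foldl_cons,
        foldl_op_par_of_le _ hl fun b hb => by have := hL.1 b hb; omega,
        op_par_of_le F hl (by omega)]
      rfl

/-- On the vertices of `U` the forest `F` looks like the path tree: the parent of `v ∈ U` is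
the largest element of `U` below `v`. -/
structure PathLikeOn (F : OForest n) (U : Set ℕ) : Prop where
  gap : ∀ v, 1 ≤ v → v ≤ n → ∀ j ∈ U, ¬ (F.par v < j ∧ j < v)
  par_mem : ∀ v, 1 ≤ v → v ≤ n → v ∈ U → F.par v ∈ U

variable {F : OForest n} {U : Set ℕ}

theorem PathLikeOn.op (hF : F.PathLikeOn U) {a : ℕ} (ha : a ≠ 0) :
    (F.op a).PathLikeOn (U \ {a}) := by
  rcases F.op_spec ha with ⟨hop, hleaf⟩ | ⟨v', hv'1, hv'n, hv'a, hmax, hop⟩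
  · rw [hop]
    exact ⟨fun v hv1 hvn j hj => hF.gap v hv1 hvn j hj.1,
      fun v hv1 hvn hv => ⟨hF.par_mem v hv1 hvn hv.1, hleaf v hv1 hvn⟩⟩
  have hav' : a < v' := hv'a ▸ F.par_lt v' hv'1 hv'n
  have hpa : F.par a < a := F.par_lt a (by omega) (by omega)
  constructor
  · intro v hv1 hvn j ⟨hjU, hja⟩
    rw [hop]
    split_ifs with hvv'
    · -- `j` would lie strictly between `F.par a` and `a`, or between `a` and its child `v'`
      subst hvv'
      rintro ⟨h1, h2⟩
      rcases Nat.lt_or_gt_of_ne hja with hlt | hgt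
      · exact hF.gap a (by omega) (by omega) j hjU ⟨h1, hlt⟩
      · exact hF.gap v hv1 hvn j hjU ⟨hv'a ▸ hgt, h2⟩
    · exact hF.gap v hv1 hvn j hjU
  · rintro v hv1 hvn ⟨hvU, -⟩
    rw [hop]
    split_ifs with hvv'
    · subst hvv'
      have haU : a ∈ U := hv'a ▸ hF.par_mem v hv1 hvn hvU
      exact ⟨hF.par_mem a (by omega) (by omega) haU, hpa.ne⟩
    · -- a child of `a` other than `v'` lies in `U` strictly between `a` and `v'`
      refine ⟨hF.par_mem v hv1 hvn hvU, fun hva => hF.gap v' hv'1 hv'n v hvU ⟨?_, ?_⟩⟩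
      · exact hv'a ▸ hva ▸ F.par_lt v hv1 hvn
      · exact lt_of_le_of_ne (hmax v hv1 hvn hva) hvv'

theorem PathLikeOn.foldl_op (hF : F.PathLikeOn U) {L : List ℕ} (hL : ∀ a ∈ L, a ≠ 0) :
    (L.foldl OForest.op F).PathLikeOn {j ∈ U | j ∉ L} := by
  induction L generalizing F U with
  | nil => simpa using hF
  | cons a L ih =>
    rw [List.forall_mem_cons] at hL
    rw [List.foldl_cons]
    convert ih (hF.op hL.1) hL.2 using 1
    ext j
    simp [and_assoc]

theorem PathLikeOn.par_eq (hF : F.PathLikeOn U) {k l : ℕ} (hl : 1 ≤ l) (hln : l ≤ n)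
    (hlU : l ∈ U) (hkU : k ∈ U) (hkl : k < l) (hbetween : ∀ i, k < i → i < l → i ∉ U) :
    F.par l = k := by
  have hpl := F.par_lt l hl hln
  have hkp : k ≤ F.par l := not_lt.1 fun h => hF.gap l hl hln k hkU ⟨h, hkl⟩
  by_contra hne
  exact hbetween _ (lt_of_le_of_ne hkp (Ne.symm hne)) hpl (hF.par_mem l hl hln hlU)

end OForest

theorem pathForest_pathLikeOn_univ (n : ℕ) : (pathForest n).PathLikeOn Set.univ where
  gap v hv1 hvn j _ := by
    change ¬ ((if 1 ≤ v ∧ v ≤ n then v - 1 else 0) < j ∧ j < v)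
    rw [if_pos ⟨hv1, hvn⟩]
    omega
  par_mem _ _ _ _ := Set.mem_univ _

def unoperated (S : ℕ → Finset ℕ) (t : ℕ) : Set ℕ :=
  {j | ∀ s, 1 ≤ s → s ≤ t → j ∉ S s}

theorem unoperated_zero (S : ℕ → Finset ℕ) : unoperated S 0 = Set.univ :=
  Set.eq_univ_of_forall fun _ _ h1 h2 => absurd h2 (by omega)

theorem unoperated_succ (S : ℕ → Finset ℕ) (t : ℕ) :
    unoperated S (t + 1) = {j ∈ unoperated S t | j ∉ S (t + 1)} := by
  ext j
  constructor
  · intro h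
    exact ⟨fun s h1 h2 => h s h1 (by omega), h (t + 1) (by omega) le_rfl⟩
  · rintro ⟨h, hj⟩ s h1 h2
    rcases Nat.lt_or_eq_of_le h2 with h2 | rfl
    · exact h s h1 (by omega)
    · exact hj

theorem pathLikeOn_trajOfSets {n : ℕ} {S : ℕ → Finset ℕ} (h0 : ∀ t, 0 ∉ S t) (t : ℕ) :
    (trajOfSets n S t).PathLikeOn (unoperated S t) := by
  induction t with
  | zero => rw [unoperated_zero]; exact pathForest_pathLikeOn_univ n
  | succ t ih =>
    have := ih.foldl_op (L := (S (t + 1)).sort (· ≤ ·))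
      fun a ha h => h0 (t + 1) (h ▸ (Finset.mem_sort _).1 ha)
    rw [trajOfSets, unoperated_succ]
    simpa only [Finset.mem_sort] using this

theorem thm15_general (n : ℕ) (S : ℕ → Finset ℕ) (hS : ∀ t, S t ⊆ Finset.Icc 1 n)
    (k l hl : ℕ) (hkl : k < l) (hln : l ≤ n) (hhl : 1 ≤ hl)
    (hlfirst : ∀ t, 1 ≤ t → t < hl → l ∉ S t)
    (hknot : ∀ t, 1 ≤ t → t ≤ hl → k ∉ S t)
    (hbetween : ∀ i, k < i → i < l → ∃ t, 1 ≤ t ∧ t ≤ hl ∧ i ∈ S t) :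
    (trajOfSets n S hl).par l = k := by
  obtain ⟨u, rfl⟩ : ∃ u, hl = u + 1 := ⟨hl - 1, by omega⟩
  have h0 : ∀ t, 0 ∉ S t := fun t h => by simpa using hS t h
  set L := ((S (u + 1)).sort (· ≤ ·)).filter (· < l)
  have hpath := (pathLikeOn_trajOfSets (n := n) h0 u).foldl_op (L := L)
    fun a ha h => h0 (u + 1) (h ▸ (Finset.mem_sort _).1 (List.mem_of_mem_filter ha))
  rw [trajOfSets, OForest.foldl_op_par_eq_filter_lt _ (Finset.sortedLT_sort _).pairwise
    (by omega)]
  refine hpath.par_eq (by omega) hln ⟨fun s h1 h2 => hlfirst s h1 (by omega), ?_⟩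
    ⟨fun s h1 h2 => hknot s h1 (by omega), ?_⟩ hkl fun i hki hil ⟨hiU, hiL⟩ => ?_
  · simp [L]
  · exact fun hkL => hknot (u + 1) (by omega) le_rfl
      ((Finset.mem_sort _).1 (List.mem_of_mem_filter hkL))
  · obtain ⟨t, ht1, htu, hit⟩ := hbetween i hki hil
    rcases Nat.lt_or_eq_of_le htu with htu | rfl
    · exact hiU t ht1 (by omega) hit
    · exact hiL (by simp [L, hit, hil])

/-- Let `S_1, S_2, …` be subsets of `[n]` and apply the corresponding operations to the path
tree.  For vertices `k < l`, if `h_l` is the first time `l` is operated on, `k` is not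
operated on at any time `≤ h_l`, and every vertex strictly between `k` and `l` is operated
on at some time `≤ h_l`, then after `h_l` moves the vertex `l` is a child of the vertex
`k`. -/
theorem thm15 (n : ℕ) (S : ℕ → Finset ℕ) (hS : ∀ t, S t ⊆ Finset.Icc 1 n)
    (k l hl : ℕ) (hk : 1 ≤ k) (hkl : k < l) (hln : l ≤ n) (hhl : 1 ≤ hl)
    (hlin : l ∈ S hl) (hlfirst : ∀ t, 1 ≤ t → t < hl → l ∉ S t)
    (hknot : ∀ t, 1 ≤ t → t ≤ hl → k ∉ S t)
    (hbetween : ∀ i, k < i → i < l → ∃ t, 1 ≤ t ∧ t ≤ hl ∧ i ∈ S t) :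
    (trajOfSets n S hl).par l = k :=
  thm15_general n S hS k l hl hkl hln hhl hlfirst hknot hbetween
end
end

section
/- Let n ≥ 16 be an integer, and let A be an n-good two-rowed array whose n-summary has top row 1, a_{i_1}, a_{i_2}, …, a_{i_{l'}} (so the summary of the top row excluding the leading 1 has l' terms). Then (log n)/(log log n) − 3 ≤ l' ≤ 2(log n)/(log log n) + 2. -/
open scoped Classical

noncomputable section

/-- Auxiliary recursion for the `n`-summary of a strictly decreasing list: given the
previously chosen term `cur` and the remaining terms `l`, the next chosen term is the
smallest member of `l` that is `≥ cur / log n` (the last term of the prefix of terms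
`≥ cur / log n`, as `l` is decreasing); the process terminates when no such member exists. -/
def nsumAux (n : ℕ) : ℕ → ℕ → List ℕ → List ℕ
  | 0, _, _ => []
  | fuel + 1, cur, l =>
    let pred : ℕ → Bool := fun y => decide ((cur : ℝ) / Real.log n ≤ (y : ℝ))
    match (l.takeWhile pred).getLast? with
    | none => []
    | some y => y :: nsumAux n fuel y (l.dropWhile pred)

/-- The `n`-summary of a (strictly decreasing) list of integers: the first term, and then
inductively the smallest member of the sequence that is `≥ (previous chosen term)/(log n)`,
terminating when no such member exists. -/
def nsummary (n : ℕ) (l : List ℕ) : List ℕ :=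
  match l with
  | [] => []
  | x :: xs => x :: nsumAux n xs.length x xs

/-- A two-rowed array `[a_1 … a_l ; b_1 … b_l]`, encoded as a list of columns, is
`n`-childlike if all entries lie in `[n]`, `a_1 = 1`, `n ≥ a_2 > a_3 > ⋯ > a_l = 2`, and
`b_1 > b_2 ≥ b_3 ≥ ⋯ ≥ b_l`. -/
def NChildlike (n : ℕ) (A : List (ℕ × ℕ)) : Prop :=
  (∀ c ∈ A, 1 ≤ c.1 ∧ c.1 ≤ n ∧ 1 ≤ c.2 ∧ c.2 ≤ n) ∧
  A.head?.map Prod.fst = some 1 ∧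
  A.tail ≠ [] ∧
  List.Chain' (fun x y => y < x) (A.tail.map Prod.fst) ∧
  (A.tail.map Prod.fst).getLast? = some 2 ∧
  List.Chain' (fun x y => y ≤ x) (A.map Prod.snd) ∧
  (∀ b1 ∈ A.head?.map Prod.snd, ∀ b2 ∈ (A.tail.head?).map Prod.snd, b2 < b1)

/-- An array is `n`-good if it is `n`-childlike and the `n`-summary `a_{i_1}, …, a_{i_{l'}}`
of its top row (excluding the leading `1`) satisfies `a_{i_1} ≥ n / log n` and
`a_{i_{l'}} ≤ (log n)³`. -/
def NGood (n : ℕ) (A : List (ℕ × ℕ)) : Prop :=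
  NChildlike n A ∧
  nsummary n (A.tail.map Prod.fst) ≠ [] ∧
  (∀ x ∈ (nsummary n (A.tail.map Prod.fst)).head?, (n : ℝ) / Real.log n ≤ (x : ℝ)) ∧
  (∀ x ∈ (nsummary n (A.tail.map Prod.fst)).getLast?, (x : ℝ) ≤ (Real.log n) ^ 3)

/-! Write `L = log n` and `s₁ > s₂ > ⋯ > s_{l'}` for the summary. The choice rule gives
`s_{i+1} ≥ s_i / L`, and since `s_{i+1}` is the *smallest* admissible term, `s_{i+2} < s_i / L`.
The first inequality gives `n / L ≤ s₁ ≤ L^{l'-1} s_{l'} ≤ L^{l'+2}`, i.e. `n ≤ L^{l'+3}`; the second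
gives `L^{⌊(l'-1)/2⌋} ≤ L^{⌊(l'-1)/2⌋} s_{l'} ≤ s₁ ≤ n`. Taking logarithms yields both bounds. -/

open Real

section OrderedField

variable {K : Type*} [Field K] [LinearOrder K] [IsStrictOrderedRing K] {L : K}

theorem List.head_div_pow_le_getLast (hL : 0 < L) :
    ∀ {s : List K} (hne : s ≠ []), s.IsChain (fun a b => a / L ≤ b) →
      s.head hne / L ^ (s.length - 1) ≤ s.getLast hne
  | [a], _, _ => by simp
  | a :: b :: t, _, hs => by
    obtain ⟨hab, hbt⟩ := List.isChain_cons_cons.1 hs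
    calc a / L ^ (t.length + 1) = a / L / L ^ t.length := by rw [pow_succ', div_div]
      _ ≤ b / L ^ t.length := by gcongr
      _ ≤ (b :: t).getLast (List.cons_ne_nil b t) :=
        List.head_div_pow_le_getLast hL (List.cons_ne_nil b t) hbt

theorem mul_pow_half_le_of_le_div {f : ℕ → K} (hL : 0 < L) (h₁ : f 1 ≤ f 0)
    (hf : ∀ i, f (i + 2) ≤ f i / L) (m : ℕ) : f m * L ^ (m / 2) ≤ f 0 := by
  induction m using Nat.strong_induction_on with
  | _ m ih =>
    match m, ih with
    | 0, _ => simp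
    | 1, _ => simpa using h₁
    | m + 2, ih =>
      calc f (m + 2) * L ^ ((m + 2) / 2) = f (m + 2) * L * L ^ (m / 2) := by
            rw [Nat.add_div_right m two_pos, pow_succ]; ring
        _ ≤ f m * L ^ (m / 2) := by gcongr; exact (le_div_iff₀ hL).1 (hf m)
        _ ≤ f 0 := ih m (by omega)

end OrderedField

-- Entries past the end read as `0`, so the two-step decay `hs` can be required for every `i`.
theorem List.getLast_mul_pow_le_head {s : List ℕ} (hne : s ≠ []) {L : ℝ} (hL : 0 < L)
    (hdec : s.Pairwise (· > ·)) (hs : ∀ i, (s.getD (i + 2) 0 : ℝ) ≤ s.getD i 0 / L) :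
    (s.getLast hne : ℝ) * L ^ ((s.length - 1) / 2) ≤ s.head hne := by
  have h₁ : s.getD 1 0 ≤ s.getD 0 0 := by
    match s, hdec with
    | [], _ | [_], _ => simp
    | a :: b :: _, hdec => simpa using ((List.pairwise_cons.1 hdec).1 b List.mem_cons_self).le
  have hpos : 0 < s.length := List.length_pos_iff.2 hne
  have hhead : s.head hne = s.getD 0 0 := by
    rw [List.head_eq_getElem, List.getD_eq_getElem _ _ hpos]
  have hlast : s.getLast hne = s.getD (s.length - 1) 0 := by
    rw [List.getLast_eq_getElem, List.getD_eq_getElem _ _ (by omega)]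
  rw [hhead, hlast]
  exact mul_pow_half_le_of_le_div (f := fun i => (s.getD i 0 : ℝ)) hL
    (by exact_mod_cast h₁) hs (s.length - 1)

theorem List.lt_of_mem_dropWhile_le {l : List ℕ} (hl : l.Pairwise (· > ·)) {c : ℝ} {z : ℕ}
    (hz : z ∈ l.dropWhile fun a : ℕ => decide (c ≤ (a : ℝ))) : (z : ℝ) < c := by
  induction l with
  | nil => simp at hz
  | cons x xs ih =>
    obtain ⟨hx, hxs⟩ := List.pairwise_cons.1 hl
    by_cases hc : c ≤ x
    · rw [List.dropWhile_cons_of_pos (by simpa using hc)] at hz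
      exact ih hxs hz
    · rw [List.dropWhile_cons_of_neg (by simpa using hc)] at hz
      rcases List.mem_cons.1 hz with rfl | hz
      · exact not_le.1 hc
      · exact lt_trans (by exact_mod_cast hx z hz) (not_le.1 hc)

section Summary

variable {n : ℕ}

theorem nsumAux_sublist : ∀ (fuel cur : ℕ) (l : List ℕ), (nsumAux n fuel cur l).Sublist l
  | 0, _, _ => List.nil_sublist _
  | fuel + 1, cur, l => by
    unfold nsumAux
    dsimp only
    split
    · exact List.nil_sublist _
    · rename_i y hy
      refine ((List.singleton_sublist.2 (List.mem_of_getLast? hy)).append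
        (nsumAux_sublist fuel y _)).trans ?_
      rw [List.takeWhile_append_dropWhile]

theorem isChain_nsumAux : ∀ (fuel cur : ℕ) (l : List ℕ),
    (cur :: nsumAux n fuel cur l).IsChain fun a b : ℕ => (a : ℝ) / log n ≤ b
  | 0, _, _ => List.isChain_singleton _
  | fuel + 1, cur, l => by
    unfold nsumAux
    dsimp only
    split
    · exact List.isChain_singleton _
    · rename_i y hy
      refine List.isChain_cons_cons.2 ⟨?_, isChain_nsumAux fuel y _⟩
      simpa using List.mem_takeWhile_imp (List.mem_of_getLast? hy)

theorem getD_nsumAux_add_two_le : ∀ (fuel cur : ℕ) {l : List ℕ}, l.Pairwise (· > ·) → ∀ i,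
    ((cur :: nsumAux n fuel cur l).getD (i + 2) 0 : ℝ) ≤
      (cur :: nsumAux n fuel cur l).getD i 0 / log n
  | 0, _, _, _, _ => by
    rw [List.getD_eq_default _ _ (by simp [nsumAux]), Nat.cast_zero]; positivity
  | fuel + 1, cur, l, hl, i => by
    unfold nsumAux
    dsimp only
    split
    · rw [List.getD_eq_default _ _ (by simp), Nat.cast_zero]; positivity
    · rename_i y hy
      match i with
      | 0 =>
        have hlt : ∀ z ∈ nsumAux n fuel y (l.dropWhile _), (z : ℝ) < cur / log n :=
          fun z hz => List.lt_of_mem_dropWhile_le hl ((nsumAux_sublist _ _ _).subset hz)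
        generalize nsumAux n fuel y _ = r at hlt ⊢
        cases r with
        | nil => rw [List.getD_eq_default _ _ (by simp), Nat.cast_zero]; positivity
        | cons z _ => simpa using (hlt z List.mem_cons_self).le
      | i + 1 =>
        simpa using getD_nsumAux_add_two_le fuel y (hl.sublist (List.dropWhile_sublist _)) i

theorem nsummary_sublist : ∀ l : List ℕ, (nsummary n l).Sublist l
  | [] => List.Sublist.slnil
  | x :: xs => (nsumAux_sublist _ x xs).cons_cons x

theorem isChain_nsummary :
    ∀ l : List ℕ, (nsummary n l).IsChain fun a b : ℕ => (a : ℝ) / log n ≤ b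
  | [] => List.IsChain.nil
  | x :: xs => isChain_nsumAux _ x xs

theorem getD_nsummary_add_two_le : ∀ {l : List ℕ}, l.Pairwise (· > ·) → ∀ i,
    ((nsummary n l).getD (i + 2) 0 : ℝ) ≤ (nsummary n l).getD i 0 / log n
  | [], _, i => by simp [nsummary]
  | x :: xs, hl, i => getD_nsumAux_add_two_le _ x hl.of_cons i

theorem NChildlike.pairwise_topRow {A : List (ℕ × ℕ)} (hA : NChildlike n A) :
    (A.tail.map Prod.fst).Pairwise (· > ·) :=
  List.isChain_iff_pairwise.1 hA.2.2.2.1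

theorem NChildlike.mem_topRow {A : List (ℕ × ℕ)} (hA : NChildlike n A) {a : ℕ}
    (ha : a ∈ A.tail.map Prod.fst) : 1 ≤ a ∧ a ≤ n := by
  obtain ⟨c, hc, rfl⟩ := List.mem_map.1 ha
  exact ⟨(hA.1 c (List.mem_of_mem_tail hc)).1, (hA.1 c (List.mem_of_mem_tail hc)).2.1⟩

theorem NGood.le_log_pow {A : List (ℕ × ℕ)} (hL : 0 < log n) (hA : NGood n A) :
    (n : ℝ) ≤ log n ^ ((nsummary n (A.tail.map Prod.fst)).length + 3) := by
  obtain ⟨-, hne, hhead, hlast⟩ := hA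
  set s := nsummary n (A.tail.map Prod.fst)
  have key := List.head_div_pow_le_getLast hL (by simpa using hne)
    ((List.isChain_map (Nat.cast : ℕ → ℝ)).2 (isChain_nsummary _))
  rw [List.head_map, List.getLast_map, List.length_map] at key
  have h₁ := hhead _ (List.head?_eq_some_head hne)
  have h₂ := hlast _ (List.getLast?_eq_some_getLast hne)
  obtain ⟨k, hk⟩ := Nat.exists_eq_add_one.2 (List.length_pos_iff.2 hne)
  rw [hk, Nat.add_sub_cancel] at key
  rw [hk]
  calc (n : ℝ) = n / log n / log n ^ k * log n ^ (k + 1) := by field_simp; ring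
    _ ≤ s.head hne / log n ^ k * log n ^ (k + 1) := by gcongr
    _ ≤ s.getLast hne * log n ^ (k + 1) := by gcongr
    _ ≤ log n ^ 3 * log n ^ (k + 1) := by gcongr
    _ = log n ^ (k + 1 + 3) := by ring

theorem NGood.log_pow_le {A : List (ℕ × ℕ)} (hL : 0 < log n) (hA : NGood n A) :
    log n ^ (((nsummary n (A.tail.map Prod.fst)).length - 1) / 2) ≤ n := by
  obtain ⟨hchild, hne, -, -⟩ := hA
  set s := nsummary n (A.tail.map Prod.fst)
  have hsub : s.Sublist (A.tail.map Prod.fst) := nsummary_sublist _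
  have hmem : ∀ a ∈ s, 1 ≤ a ∧ a ≤ n := fun a ha => hchild.mem_topRow (hsub.subset ha)
  have hlast : (1 : ℝ) ≤ s.getLast hne := by exact_mod_cast (hmem _ (List.getLast_mem hne)).1
  have hhead : (s.head hne : ℝ) ≤ n := by exact_mod_cast (hmem _ (List.head_mem hne)).2
  calc log n ^ ((s.length - 1) / 2) ≤ s.getLast hne * log n ^ ((s.length - 1) / 2) :=
        le_mul_of_one_le_left (by positivity) hlast
    _ ≤ s.head hne := List.getLast_mul_pow_le_head hne hL
        (hchild.pairwise_topRow.sublist hsub) (getD_nsummary_add_two_le hchild.pairwise_topRow)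
    _ ≤ n := hhead

end Summary

theorem one_lt_log_of_three_le {x : ℝ} (hx : 3 ≤ x) : 1 < log x := by
  rw [lt_log_iff_exp_lt (by linarith)]
  linarith [exp_one_lt_d9]

theorem log_div_log_log_sub_three_le {x : ℝ} (hx : 0 < x) (hL : 1 < log x) {k : ℕ}
    (h : x ≤ log x ^ (k + 3)) : log x / log (log x) - 3 ≤ k := by
  have hlog : log x ≤ (k + 3 : ℕ) * log (log x) := by
    rw [← log_pow]
    exact log_le_log hx h
  rw [sub_le_iff_le_add, div_le_iff₀ (log_pos hL)]
  push_cast at hlog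
  linarith

theorem le_two_mul_log_div_log_log_add_two {x : ℝ} (hL : 1 < log x) {k : ℕ}
    (h : log x ^ ((k - 1) / 2) ≤ x) : (k : ℝ) ≤ 2 * log x / log (log x) + 2 := by
  have hx : 0 < x := (pow_pos (by linarith) _).trans_le h
  have hhalf : (((k - 1) / 2 : ℕ) : ℝ) ≤ log x / log (log x) := by
    rw [le_div_iff₀ (log_pos hL)]
    exact (pow_le_iff_le_log (by linarith) hx).1 h
  have hk : (k : ℝ) ≤ 2 * ((k - 1) / 2 : ℕ) + 2 := by
    exact_mod_cast (by omega : k ≤ 2 * ((k - 1) / 2) + 2)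
  rw [mul_div_assoc]
  linarith

/-- For an `n`-good array with `n ≥ 16`, the number `l'` of terms of the `n`-summary of its
top row (excluding the leading `1`) satisfies
`log n / log log n - 3 ≤ l' ≤ 2 log n / log log n + 2`. -/
theorem thm17 (n : ℕ) (hn : 16 ≤ n) (A : List (ℕ × ℕ)) (hA : NGood n A) :
    Real.log n / Real.log (Real.log n) - 3 ≤
        ((nsummary n (A.tail.map Prod.fst)).length : ℝ) ∧
      ((nsummary n (A.tail.map Prod.fst)).length : ℝ) ≤
        2 * Real.log n / Real.log (Real.log n) + 2 := by
  have hn16 : (16 : ℝ) ≤ n := by exact_mod_cast hn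
  have hL : 1 < log n := one_lt_log_of_three_le (by linarith)
  exact ⟨log_div_log_log_sub_three_le (by linarith) hL (hA.le_log_pow (by linarith)),
    le_two_mul_log_div_log_log_add_two hL (hA.log_pow_le (by linarith))⟩

end
end
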